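/- Let a₁, …, aₙ ∈ H_d with hyperbolic distance matrix D = [d^κ_H(a_i, a_j)], and let A = [cosh(√κ d_{ij})]. Then A = [a_i ∘ a_j], A has exactly one positive eigenvalue and at most d negative eigenvalues, and any points x₁, …, xₙ ∈ ℝ^{1,d} satisfying x_i ∘ x_j = a_i ∘ a_j for all i,j form a configuration isometric to (a_i): d^κ_H(x_i, x_j) = d^κ_H(a_i, a_j) for all i,j. -/

import Mathlib

/-!
With `v = ∑ i, x i • a i`, the quadratic form of the Gram matrix `[a i ∘ a j]` is `x ↦ v ∘ v`.
It is `≤ 0` where `v 0 = 0` (codimension one) and `≥ 0` where the spatial part of `v` vanishes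
(codimension `d`). The span of the eigenvectors with positive (negative) eigenvalues is a subspace
on which the form is positive (negative) definite, so it meets the first (second) subspace
trivially: at most one positive and at most `d` negative eigenvalues. The trace is `n > 0`, so a
positive eigenvalue exists. The entries `cosh (√κ d(a i, a j))` equal `a i ∘ a j` because
`cosh ∘ arcosh = id` on `[1, ∞)` and `a i ∘ a j ≥ 1` by the reverse Cauchy–Schwarz inequality.
-/

open Matrix

def lorentz {d : ℕ} (x y : Fin (d + 1) → ℝ) : ℝ :=
  x 0 * y 0 - ∑ k : Fin d, x k.succ * y k.succ

noncomputable def arcosh (t : ℝ) : ℝ := Real.log (t + Real.sqrt (t ^ 2 - 1))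

noncomputable def dH {d : ℕ} (κ : ℝ) (x y : Fin (d + 1) → ℝ) : ℝ :=
  (1 / Real.sqrt κ) * arcosh (lorentz x y)

open Finset Module

namespace Matrix

variable {ι κ V : Type*} [Fintype ι] [Fintype κ] [DecidableEq κ]
  [AddCommGroup V] [Module ℝ V] [FiniteDimensional ℝ V]

lemma dotProduct_mulVec_sum_smul_eigenvectors {A : Matrix ι ι ℝ} {w : κ → ι → ℝ} {μ : κ → ℝ}
    (hw : ∀ k l, w k ⬝ᵥ w l = if k = l then 1 else 0) (hAw : ∀ k, A *ᵥ w k = μ k • w k)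
    (c : κ → ℝ) :
    (∑ k, c k • w k) ⬝ᵥ A *ᵥ (∑ k, c k • w k) = ∑ k, μ k * c k ^ 2 := by
  simp only [mulVec_sum, mulVec_smul, hAw, smul_smul, sum_dotProduct, dotProduct_sum,
    smul_dotProduct, dotProduct_smul, hw, smul_eq_mul, mul_ite, mul_one, mul_zero,
    sum_ite_eq', mem_univ, if_true]
  exact sum_congr rfl fun k _ => by ring

lemma card_le_finrank_of_eigenvectors {A : Matrix ι ι ℝ} {w : κ → ι → ℝ} {μ : κ → ℝ}
    (hw : ∀ k l, w k ⬝ᵥ w l = if k = l then 1 else 0) (hAw : ∀ k, A *ᵥ w k = μ k • w k)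
    (hμ : ∀ k, μ k < 0) (f : (ι → ℝ) →ₗ[ℝ] V) (hf : ∀ x, f x = 0 → 0 ≤ x ⬝ᵥ A *ᵥ x) :
    Fintype.card κ ≤ finrank ℝ V := by
  by_contra! hlt
  obtain ⟨c, hc, hc0⟩ := Submodule.exists_mem_ne_zero_of_ne_bot
    (LinearMap.ker_ne_bot_of_finrank_lt (f := f ∘ₗ Fintype.linearCombination ℝ w) (by simpa))
  obtain ⟨k, hk⟩ := Function.ne_iff.mp hc0
  have hQ := hf _ hc
  rw [Fintype.linearCombination_apply, dotProduct_mulVec_sum_smul_eigenvectors hw hAw] at hQ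
  have hneg : ∑ k, μ k * c k ^ 2 < 0 :=
    sum_neg' (fun l _ => mul_nonpos_of_nonpos_of_nonneg (hμ l).le (sq_nonneg _))
      ⟨k, mem_univ _, mul_neg_of_neg_of_pos (hμ k) (sq_pos_of_ne_zero hk)⟩
  linarith

namespace IsHermitian

variable [DecidableEq ι] {A : Matrix ι ι ℝ} (hA : A.IsHermitian)
include hA

lemma eigenvectorBasis_dotProduct (i j : ι) :
    ⇑(hA.eigenvectorBasis i) ⬝ᵥ ⇑(hA.eigenvectorBasis j) = if i = j then 1 else 0 := by
  rw [← orthonormal_iff_ite.mp hA.eigenvectorBasis.orthonormal i j,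
    EuclideanSpace.inner_eq_star_dotProduct, star_trivial, dotProduct_comm]

lemma card_neg_eigenvalues_le_finrank (f : (ι → ℝ) →ₗ[ℝ] V)
    (hf : ∀ x, f x = 0 → 0 ≤ x ⬝ᵥ A *ᵥ x) :
    #{i | hA.eigenvalues i < 0} ≤ finrank ℝ V := by
  rw [← Fintype.card_subtype]
  exact card_le_finrank_of_eigenvectors
    (w := fun k : {i // hA.eigenvalues i < 0} => ⇑(hA.eigenvectorBasis k))
    (fun k l => by simp [hA.eigenvectorBasis_dotProduct, Subtype.ext_iff])
    (fun k => hA.mulVec_eigenvectorBasis k) (fun k => k.2) f hf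

lemma card_pos_eigenvalues_le_finrank (f : (ι → ℝ) →ₗ[ℝ] V)
    (hf : ∀ x, f x = 0 → x ⬝ᵥ A *ᵥ x ≤ 0) :
    #{i | 0 < hA.eigenvalues i} ≤ finrank ℝ V := by
  rw [← Fintype.card_subtype]
  exact card_le_finrank_of_eigenvectors (A := -A) (μ := fun k => -hA.eigenvalues k)
    (w := fun k : {i // 0 < hA.eigenvalues i} => ⇑(hA.eigenvectorBasis k))
    (fun k l => by simp [hA.eigenvectorBasis_dotProduct, Subtype.ext_iff])
    (fun k => by simp [neg_mulVec, hA.mulVec_eigenvectorBasis, neg_smul])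
    (fun k => neg_neg_of_pos k.2) f (fun x hx => by simpa [neg_mulVec] using hf x hx)

lemma card_pos_eigenvalues_pos_of_trace_pos (htr : 0 < A.trace) :
    0 < #{i | 0 < hA.eigenvalues i} := by
  rw [hA.trace_eq_sum_eigenvalues] at htr
  obtain ⟨i, -, hi⟩ := exists_lt_of_sum_lt (s := univ) (f := fun _ => (0 : ℝ))
    (g := hA.eigenvalues) (by simpa using htr)
  exact card_pos.mpr ⟨i, by simpa using hi⟩

end IsHermitian

end Matrix

lemma cosh_arcosh {t : ℝ} (ht : 1 ≤ t) : Real.cosh (arcosh t) = t := by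
  have hs : Real.sqrt (t ^ 2 - 1) ^ 2 = t ^ 2 - 1 := Real.sq_sqrt (by nlinarith)
  have hpos : 0 < t + Real.sqrt (t ^ 2 - 1) := by positivity
  rw [Real.cosh_eq, arcosh, Real.exp_neg, Real.exp_log hpos]
  field_simp
  nlinarith

section Lorentz

variable {d : ℕ}

lemma lorentz_comm (x y : Fin (d + 1) → ℝ) : lorentz x y = lorentz y x := by
  simp only [lorentz, mul_comm]

lemma lorentz_self (x : Fin (d + 1) → ℝ) : lorentz x x = x 0 ^ 2 - ∑ k : Fin d, x k.succ ^ 2 := by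
  simp only [lorentz, sq]

lemma one_le_lorentz {x y : Fin (d + 1) → ℝ} (hx : lorentz x x = 1) (hx0 : 0 < x 0)
    (hy : lorentz y y = 1) (hy0 : 0 < y 0) : 1 ≤ lorentz x y := by
  rw [lorentz_self] at hx hy
  have hcs := sum_mul_sq_le_sq_mul_sq univ (fun k : Fin d => x k.succ) (fun k => y k.succ)
  unfold lorentz
  set X := ∑ k : Fin d, x k.succ ^ 2
  set Y := ∑ k : Fin d, y k.succ ^ 2
  set P := ∑ k : Fin d, x k.succ * y k.succ
  have hX : 0 ≤ X := by positivity
  have hY : 0 ≤ Y := by positivity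
  have h2P : 2 * P ≤ X + Y := by nlinarith [sq_nonneg (X - Y)]
  have hsq : (1 + P) ^ 2 ≤ (x 0 * y 0) ^ 2 := by nlinarith
  nlinarith [mul_pos hx0 hy0]

def minkowskiMetric (d : ℕ) : Matrix (Fin (d + 1)) (Fin (d + 1)) ℝ :=
  diagonal (Fin.cons 1 fun _ => -1)

lemma lorentz_eq_dotProduct_mulVec (x y : Fin (d + 1) → ℝ) :
    lorentz x y = x ⬝ᵥ minkowskiMetric d *ᵥ y := by
  simp [lorentz, minkowskiMetric, mulVec_diagonal, dotProduct, Fin.sum_univ_succ, sub_eq_add_neg]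

variable {n : ℕ} (a : Fin n → Fin (d + 1) → ℝ)

def lorentzGram : Matrix (Fin n) (Fin n) ℝ := of fun i j => lorentz (a i) (a j)

lemma lorentzGram_eq : lorentzGram a = of a * minkowskiMetric d * (of a)ᵀ := by
  ext i j
  rw [mul_apply]
  simp [lorentzGram, lorentz_eq_dotProduct_mulVec, minkowskiMetric, mul_diagonal,
    mulVec_diagonal, dotProduct, mul_assoc]

lemma dotProduct_lorentzGram_mulVec (x : Fin n → ℝ) :
    x ⬝ᵥ lorentzGram a *ᵥ x = lorentz (x ᵥ* of a) (x ᵥ* of a) := by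
  rw [lorentzGram_eq, lorentz_eq_dotProduct_mulVec, ← mulVec_mulVec, ← mulVec_mulVec,
    dotProduct_mulVec, mulVec_transpose]

lemma lorentzGram_isHermitian : (lorentzGram a).IsHermitian := by
  ext i j
  simp [lorentzGram, lorentz_comm]

lemma card_pos_eigenvalues_lorentzGram_le_one :
    #{i | 0 < (lorentzGram_isHermitian a).eigenvalues i} ≤ 1 := by
  simpa using (lorentzGram_isHermitian a).card_pos_eigenvalues_le_finrank
    (LinearMap.proj 0 ∘ₗ (of a).vecMulLinear) fun x hx => by
      simp only [LinearMap.coe_comp, Function.comp_apply, vecMulLinear_apply,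
        LinearMap.coe_proj, Function.eval] at hx
      rw [dotProduct_lorentzGram_mulVec, lorentz_self, hx]
      have : 0 ≤ ∑ k : Fin d, (x ᵥ* of a) k.succ ^ 2 := by positivity
      linarith

lemma card_neg_eigenvalues_lorentzGram_le :
    #{i | (lorentzGram_isHermitian a).eigenvalues i < 0} ≤ d := by
  simpa using (lorentzGram_isHermitian a).card_neg_eigenvalues_le_finrank
    (LinearMap.funLeft ℝ ℝ Fin.succ ∘ₗ (of a).vecMulLinear) fun x hx => by
      have hx' (k : Fin d) : (x ᵥ* of a) k.succ = 0 := congrFun hx k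
      simp [dotProduct_lorentzGram_mulVec, lorentz_self, hx', sq_nonneg]

lemma trace_lorentzGram (ha : ∀ i, lorentz (a i) (a i) = 1) : (lorentzGram a).trace = n := by
  simp [trace, lorentzGram, ha]

end Lorentz

theorem hydra_exact_recovery_structure_general {n d : ℕ} (hn : 0 < n)
    (κ : ℝ) (hκ : 0 < κ)
    (a : Fin n → (Fin (d + 1) → ℝ))
    (ha : ∀ i, lorentz (a i) (a i) = 1 ∧ 0 < a i 0)
    (D : Matrix (Fin n) (Fin n) ℝ) (hD : ∀ i j, D i j = dH κ (a i) (a j))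
    (A : Matrix (Fin n) (Fin n) ℝ)
    (hA : ∀ i j, A i j = Real.cosh (Real.sqrt κ * D i j)) :
    (∀ i j, A i j = lorentz (a i) (a j)) ∧
    (∃ hAh : A.IsHermitian,
      (Finset.univ.filter fun i => 0 < hAh.eigenvalues i).card = 1 ∧
      (Finset.univ.filter fun i => hAh.eigenvalues i < 0).card ≤ d) ∧
    (∀ x : Fin n → (Fin (d + 1) → ℝ),
      (∀ i j, lorentz (x i) (x j) = lorentz (a i) (a j)) →
      ∀ i j, dH κ (x i) (x j) = dH κ (a i) (a j)) := by
  obtain rfl : A = lorentzGram a := by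
    ext i j
    have hsκ : Real.sqrt κ ≠ 0 := (Real.sqrt_pos.mpr hκ).ne'
    rw [hA, hD, dH, ← mul_assoc, mul_one_div_cancel hsκ, one_mul,
      cosh_arcosh (one_le_lorentz (ha i).1 (ha i).2 (ha j).1 (ha j).2), lorentzGram, of_apply]
  have htr : 0 < (lorentzGram a).trace := by
    rw [trace_lorentzGram a fun i => (ha i).1]
    exact_mod_cast hn
  refine ⟨fun i j => rfl, ⟨lorentzGram_isHermitian a, ?_, card_neg_eigenvalues_lorentzGram_le a⟩,
    fun x hx i j => by rw [dH, dH, hx]⟩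
  exact le_antisymm (card_pos_eigenvalues_lorentzGram_le_one a)
    ((lorentzGram_isHermitian a).card_pos_eigenvalues_pos_of_trace_pos htr)

theorem hydra_exact_recovery_structure {n d : ℕ} (hn : 0 < n) (hd : d ≤ n - 1)
    (κ : ℝ) (hκ : 0 < κ)
    (a : Fin n → (Fin (d + 1) → ℝ))
    (ha : ∀ i, lorentz (a i) (a i) = 1 ∧ 0 < a i 0)
    (D : Matrix (Fin n) (Fin n) ℝ) (hD : ∀ i j, D i j = dH κ (a i) (a j))
    (A : Matrix (Fin n) (Fin n) ℝ)
    (hA : ∀ i j, A i j = Real.cosh (Real.sqrt κ * D i j)) :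
    (∀ i j, A i j = lorentz (a i) (a j)) ∧
    (∃ hAh : A.IsHermitian,
      (Finset.univ.filter fun i => 0 < hAh.eigenvalues i).card = 1 ∧
      (Finset.univ.filter fun i => hAh.eigenvalues i < 0).card ≤ d) ∧
    (∀ x : Fin n → (Fin (d + 1) → ℝ),
      (∀ i j, lorentz (x i) (x j) = lorentz (a i) (a j)) →
      ∀ i j, dH κ (x i) (x j) = dH κ (a i) (a j)) :=
  hydra_exact_recovery_structure_general hn κ hκ a ha D hD A hA
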